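/- Jensen lower bound for WMD: if the ground cost is Euclidean distance, then WMD between weighted point sets (a,f_a) and (b,f_b) is at least the Euclidean distance between their weighted means: WMD ≥ ‖Σ_i f_a(i) a_i − Σ_j f_b(j) b_j‖. -/

import Mathlib

/-!
A transport plan `F` with marginals `fa`, `fb` rewrites the difference of the weighted means as
`∑ i, ∑ j, F i j • (a i - b j)`, whose norm the triangle inequality bounds by the transport cost.
The product plan `fa i * fb j` makes the set of costs nonempty, so the bound passes to its infimum.
-/

open Finset

section Coupling

variable {ι κ : Type*} [Fintype ι] [Fintype κ]

theorem sum_smul_sub_sum_smul_eq_sum_sum_smul_sub {R M : Type*} [Ring R] [AddCommGroup M]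
    [Module R M] {F : ι → κ → R} {fa : ι → R} {fb : κ → R}
    (hFa : ∀ i, ∑ j, F i j = fa i) (hFb : ∀ j, ∑ i, F i j = fb j) (a : ι → M) (b : κ → M) :
    ∑ i, fa i • a i - ∑ j, fb j • b j = ∑ i, ∑ j, F i j • (a i - b j) := by
  simp only [smul_sub, sum_sub_distrib, ← sum_smul, hFa]
  rw [sum_comm]
  simp only [← sum_smul, hFb]

theorem norm_sum_sum_smul_le {E : Type*} [SeminormedAddCommGroup E] [NormedSpace ℝ E]
    {F : ι → κ → ℝ} (hF0 : ∀ i j, 0 ≤ F i j) (v : ι → κ → E) :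
    ‖∑ i, ∑ j, F i j • v i j‖ ≤ ∑ i, ∑ j, ‖v i j‖ * F i j :=
  calc ‖∑ i, ∑ j, F i j • v i j‖
      ≤ ∑ i, ∑ j, ‖F i j • v i j‖ :=
        (norm_sum_le _ _).trans (sum_le_sum fun i _ => norm_sum_le _ _)
    _ = ∑ i, ∑ j, ‖v i j‖ * F i j := by
        simp only [norm_smul, Real.norm_of_nonneg (hF0 _ _), mul_comm]

end Coupling

/-- Jensen lower bound: the distance between weighted means
lower-bounds the WMD with Euclidean ground cost. -/
theorem wmd_ge_dist_of_means {d m k : ℕ}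
    (a : Fin m → EuclideanSpace ℝ (Fin d)) (b : Fin k → EuclideanSpace ℝ (Fin d))
    (fa : Fin m → ℝ) (fb : Fin k → ℝ)
    (hfa0 : ∀ i, 0 ≤ fa i) (hfb0 : ∀ j, 0 ≤ fb j)
    (hfa1 : ∑ i, fa i = 1) (hfb1 : ∑ j, fb j = 1) :
    ‖(∑ i, fa i • a i) - (∑ j, fb j • b j)‖
      ≤ sInf {c : ℝ | ∃ F : Fin m → Fin k → ℝ,
          (∀ i j, 0 ≤ F i j) ∧ (∀ i, ∑ j, F i j = fa i) ∧
          (∀ j, ∑ i, F i j = fb j) ∧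
          c = ∑ i, ∑ j, ‖a i - b j‖ * F i j} := by
  apply le_csInf
  · exact ⟨_, fun i j => fa i * fb j, fun i j => mul_nonneg (hfa0 i) (hfb0 j),
      fun i => by rw [← mul_sum, hfb1, mul_one], fun j => by rw [← sum_mul, hfa1, one_mul], rfl⟩
  · rintro c ⟨F, hF0, hFa, hFb, rfl⟩
    rw [sum_smul_sub_sum_smul_eq_sum_sum_smul_sub hFa hFb]
    exact norm_sum_sum_smul_le hF0 _
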